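/- arXiv:2403.10531 — 8 statements merged into one kernel-verified Lean document; each statement's English description precedes it below -/
import Mathlib

section
/- There exists no lightlike hypersurface (M,g), tangent to the structure vector field ζ, of an indefinite Sasakian manifold (M̄, φ̄, ζ, η, ḡ), whose second fundamental form h is parallel, i.e. such that (∇_X h)(Y,Z) := ∇^t_X h(Y,Z) − h(∇_X Y, Z) − h(Y, ∇_X Z) = 0 for all X, Y, Z tangent to M. -/
/-- An algebraic model, at the level of (local) smooth functions and vector fields, of a
lightlike hypersurface `(M,g)`, tangent to the structure vector field `ζ`, of an
indefinite Sasakian manifold `(M̄, φ̄, ζ, η, ḡ)`, together with a chosen screen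
distribution `S(TM)` (containing `ζ`, `φ̄ ξ` and `φ̄ N`), a (local) section `ξ` of the
rank-one normal bundle `TM⊥ ⊆ TM`, the associated null transversal section `N`, and all
the induced objects of the Gauss–Weingarten equations.

* `F` models the commutative `ℝ`-algebra of smooth functions on (an open subset of) `M`;
* `E` models the `F`-module of sections of the ambient tangent bundle `TM̄` restricted to `M`;
* `η(X)` is encoded throughout as `ḡ(X,ζ)`, `u(X)` as `g(X,V)`, `v(X)` as `g(X,U)` and
  `θ(X)` as `ḡ(X,N)`. -/
structure SasakiLightlikeHypersurface (F : Type) [CommRing F] [Algebra ℝ F]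
    (E : Type) [AddCommGroup E] [Module F E] where
  /-- the submodule of vector fields tangent to the hypersurface `M` -/
  TM : Submodule F E
  /-- the ambient metric `ḡ` (whose restriction to `TM` is the degenerate induced metric `g`) -/
  gbar : E →ₗ[F] E →ₗ[F] F
  gbar_symm : ∀ X Y : E, gbar X Y = gbar Y X
  /-- the directional derivative `X ⬝ f` of functions along tangent vector fields -/
  D : TM → Derivation ℝ F F
  D_add : ∀ X Y : TM, D (X + Y) = D X + D Y
  D_smul : ∀ (f : F) (X : TM) (k : F), D (f • X) k = f * D X k
  /-- the Lie bracket of vector fields tangent to `M` -/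
  bracket : TM → TM → TM
  D_bracket : ∀ (X Y : TM) (f : F), D (bracket X Y) f = D X (D Y f) - D Y (D X f)
  /-- the ambient Levi-Civita connection `∇̄`, in directions tangent to `M` -/
  nablaBar : TM → E → E
  nablaBar_add : ∀ (X Y : TM) (Z : E), nablaBar (X + Y) Z = nablaBar X Z + nablaBar Y Z
  nablaBar_smul : ∀ (f : F) (X : TM) (Z : E), nablaBar (f • X) Z = f • nablaBar X Z
  nablaBar_add' : ∀ (X : TM) (Y Z : E), nablaBar X (Y + Z) = nablaBar X Y + nablaBar X Z
  nablaBar_leibniz : ∀ (X : TM) (f : F) (Y : E),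
    nablaBar X (f • Y) = D X f • Y + f • nablaBar X Y
  nablaBar_metric : ∀ (X : TM) (Y Z : E),
    D X (gbar Y Z) = gbar (nablaBar X Y) Z + gbar Y (nablaBar X Z)
  nablaBar_torsion_free : ∀ X Y : TM,
    nablaBar X (Y : E) - nablaBar Y (X : E) = (bracket X Y : E)
  /-- a (local) section `ξ` of the rank-one lightlike normal bundle `TM⊥ ⊆ TM` -/
  xi : TM
  xi_normal : ∀ Y : TM, gbar (xi : E) (Y : E) = 0
  xi_spans : ∀ X : TM, (∀ Y : TM, gbar (X : E) (Y : E) = 0) →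
    ∃ f : F, (X : E) = f • (xi : E)
  /-- the screen distribution `S(TM)`, a nondegenerate complement of `TM⊥` in `TM` -/
  S : Submodule F E
  S_le : S ≤ TM
  S_compl : ∀ X : TM, ∃ W ∈ S, ∃ f : F, (X : E) = W + f • (xi : E)
  S_nondeg : ∀ W ∈ S, (∀ Z ∈ S, gbar W Z = 0) → W = 0
  /-- the null transversal section `N`, with `ḡ(ξ,N) = 1`, `ḡ(N,N) = 0`, `ḡ(N, S(TM)) = 0` -/
  Nt : E
  gbar_xi_Nt : gbar (xi : E) Nt = 1
  gbar_Nt_Nt : gbar Nt Nt = 0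
  gbar_Nt_S : ∀ Z ∈ S, gbar Nt Z = 0
  /-- the induced connection `∇` on `M` -/
  nabla : TM → TM → TM
  /-- the local second fundamental form `B` of `M` (the second fundamental form being
  `h(X,Y) = B(X,Y) N`) -/
  B : TM → TM → F
  /-- Gauss equation: `∇̄_X Y = ∇_X Y + B(X,Y) N` -/
  gauss : ∀ X Y : TM, nablaBar X (Y : E) = (nabla X Y : E) + B X Y • Nt
  /-- the shape operator `A_N` of `M` -/
  AN : TM → TM
  /-- the transversal `1`-form `τ`, so that the transversal connection is `∇ᵗ_X N = τ(X) N` -/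
  tau : TM → F
  /-- Weingarten equation: `∇̄_X N = −A_N X + τ(X) N` -/
  weingarten : ∀ X : TM, nablaBar X Nt = -(AN X : E) + tau X • Nt
  /-- the screen shape operator `A*_ξ` -/
  Astar : TM → TM
  /-- `∇_X ξ = −A*_ξ X − τ(X) ξ` -/
  weingarten_screen : ∀ X : TM, nablaBar X (xi : E) = -(Astar X : E) - tau X • (xi : E)
  /-- the projection `P` of `TM` onto `S(TM)`: `X = PX + θ(X) ξ`, `θ(X) = ḡ(X,N)` -/
  P : TM → TM
  P_mem : ∀ X : TM, (P X : E) ∈ S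
  P_spec : ∀ X : TM, (X : E) = (P X : E) + gbar (X : E) Nt • (xi : E)
  /-- the induced connection `∇*` on the screen distribution -/
  nablaStar : TM → TM → TM
  /-- the local second fundamental form `C` of the screen distribution -/
  C : TM → TM → F
  nablaStar_mem : ∀ (X Y : TM), (Y : E) ∈ S → (nablaStar X Y : E) ∈ S
  /-- screen Gauss equation: `∇_X PY = ∇*_X PY + C(X,PY) ξ` -/
  screen_gauss : ∀ (X Y : TM), (Y : E) ∈ S → nabla X Y = nablaStar X Y + C X Y • xi
  /-- the ambient almost contact structure tensor `φ̄` -/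
  phibar : E →ₗ[F] E
  /-- the structure vector field `ζ`, tangent to `M` and lying in the screen distribution -/
  zeta : TM
  zeta_mem : (zeta : E) ∈ S
  gbar_zeta_zeta : gbar (zeta : E) (zeta : E) = 1
  /-- `φ̄² X = −X + η(X) ζ`, where `η(X) = ḡ(X,ζ)` -/
  phibar_sq : ∀ X : E, phibar (phibar X) = -X + gbar X (zeta : E) • (zeta : E)
  /-- `ḡ(φ̄X, φ̄Y) = ḡ(X,Y) − η(X) η(Y)` -/
  phibar_metric : ∀ X Y : E,
    gbar (phibar X) (phibar Y) = gbar X Y - gbar X (zeta : E) * gbar Y (zeta : E)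
  /-- Sasakian condition: `(∇̄_X φ̄) Y = ḡ(X,Y) ζ − η(Y) X` -/
  sasaki : ∀ (X : TM) (Y : E), nablaBar X (phibar Y) - phibar (nablaBar X Y)
    = gbar (X : E) Y • (zeta : E) - gbar Y (zeta : E) • (X : E)
  /-- `∇̄_X ζ = −φ̄ X` -/
  sasaki_zeta : ∀ X : TM, nablaBar X (zeta : E) = -(phibar (X : E))
  /-- `U = −φ̄ N`, tangent to `M` and lying in the screen distribution -/
  U : TM
  U_mem : (U : E) ∈ S
  U_spec : (U : E) = -(phibar Nt)
  /-- `V = −φ̄ ξ`, tangent to `M` and lying in the screen distribution -/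
  V : TM
  V_mem : (V : E) ∈ S
  V_spec : (V : E) = -(phibar (xi : E))
  /-- the induced structure tensor `φ` on `M` -/
  phi : TM → TM
  /-- `φ̄ X = φ X + u(X) N`, where `u(X) = g(X,V)` -/
  phi_spec : ∀ X : TM, phibar (X : E) = (phi X : E) + gbar (X : E) (V : E) • Nt


/-! Contracting `∇h` with `ξ` and with `ζ` gives, for any such hypersurface,
`(∇_X B)(Y, ξ) = B(Y, A*_ξ X)` and `(∇_X B)(Y, ζ) = B(X, φY) + B(Y, φX)`. If `h` is parallel,
the second identity with `X = U` (where `φU = 0`) gives `B(U, φ·) = 0`; evaluating it on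
`φ(A*_ξ U)` through `φ² = -I + η ⊗ ζ + u ⊗ U` and using the first identity leaves
`u(U) = 0`, whereas `u(U) = ḡ(U, V) = 1`. -/

namespace SasakiLightlikeHypersurface

variable {F E : Type} [CommRing F] [Algebra ℝ F] [AddCommGroup E] [Module F E]
  (H : SasakiLightlikeHypersurface F E)

lemma gbar_xi_right (X : H.TM) : H.gbar X H.xi = 0 := by
  rw [H.gbar_symm]; exact H.xi_normal X

lemma gbar_Nt_xi : H.gbar H.Nt H.xi = 1 := by
  rw [H.gbar_symm]; exact H.gbar_xi_Nt

lemma B_eq_gbar_nablaBar (X Y : H.TM) : H.B X Y = H.gbar (H.nablaBar X Y) H.xi := by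
  simp [H.gauss, gbar_xi_right, gbar_Nt_xi]

lemma B_xi_right (X : H.TM) : H.B X H.xi = 0 := by
  simp [B_eq_gbar_nablaBar, H.weingarten_screen, gbar_xi_right]

lemma B_symm (X Y : H.TM) : H.B X Y = H.B Y X := by
  have h := H.gbar_xi_right (H.bracket X Y)
  rw [← H.nablaBar_torsion_free, map_sub, LinearMap.sub_apply] at h
  rw [B_eq_gbar_nablaBar, B_eq_gbar_nablaBar]
  exact sub_eq_zero.mp h

lemma B_add_right (X Y Z : H.TM) : H.B X (Y + Z) = H.B X Y + H.B X Z := by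
  simp [B_eq_gbar_nablaBar, H.nablaBar_add']

lemma B_smul_right (f : F) (X Y : H.TM) : H.B X (f • Y) = f * H.B X Y := by
  simp [B_eq_gbar_nablaBar, H.nablaBar_leibniz, gbar_xi_right]

lemma B_neg_right (X Y : H.TM) : H.B X (-Y) = -H.B X Y := by
  simpa using H.B_smul_right (-1) X Y

lemma B_zero_right (X : H.TM) : H.B X 0 = 0 := by
  simpa using H.B_smul_right 0 X 0

lemma gbar_Astar (X W : H.TM) : H.gbar (H.Astar X) W = H.B X W := by
  have h := H.nablaBar_metric X H.xi W
  simp only [H.xi_normal, H.weingarten_screen, H.gauss, H.gbar_xi_Nt, map_zero, map_add,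
    map_sub, map_neg, map_smul, LinearMap.sub_apply, LinearMap.neg_apply, LinearMap.smul_apply,
    smul_eq_mul, mul_zero, mul_one, sub_zero, zero_add] at h
  linear_combination h

lemma gbar_Nt_Astar (X : H.TM) : H.gbar H.Nt (H.Astar X) = 0 := by
  have h := H.nablaBar_metric X H.xi H.Nt
  simp only [H.gbar_xi_Nt, H.weingarten_screen, H.weingarten, H.xi_normal,
    Derivation.map_one_eq_zero, map_add, map_sub, map_neg, map_smul, LinearMap.sub_apply,
    LinearMap.neg_apply, LinearMap.smul_apply, smul_eq_mul, mul_one, neg_zero, zero_add,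
    sub_add_cancel, zero_eq_neg] at h
  rwa [H.gbar_symm]

lemma phibar_V : H.phibar H.V = H.xi := by
  simp [H.V_spec, H.phibar_sq, H.xi_normal]

lemma gbar_V_zeta : H.gbar H.V H.zeta = 0 := by
  have h := congrArg (H.gbar · H.zeta) (H.phibar_sq H.V)
  simp only [phibar_V, map_add, map_neg, map_smul, LinearMap.add_apply, LinearMap.neg_apply,
    LinearMap.smul_apply, smul_eq_mul, H.gbar_zeta_zeta, mul_one, neg_add_cancel] at h
  have h' := congrArg (H.gbar · H.zeta) H.V_spec
  simp only [map_neg, LinearMap.neg_apply, h, neg_zero] at h'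
  exact h'

lemma gbar_phibar_xi (W : E) : H.gbar (H.phibar W) H.xi = H.gbar W H.V := by
  rw [← phibar_V, H.phibar_metric, gbar_V_zeta, mul_zero, sub_zero]

lemma gbar_U_V : H.gbar H.U H.V = 1 := by
  rw [← gbar_phibar_xi, H.U_spec, map_neg, map_neg, H.phibar_sq]
  simp [gbar_Nt_xi, gbar_xi_right]

lemma B_zeta_right (X : H.TM) : H.B X H.zeta = -H.gbar X H.V := by
  rw [B_eq_gbar_nablaBar, H.sasaki_zeta, map_neg, LinearMap.neg_apply, gbar_phibar_xi]

lemma nabla_xi (X : H.TM) : H.nabla X H.xi = -H.Astar X - H.tau X • H.xi := by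
  ext
  have h := H.gauss X H.xi
  rw [B_xi_right, H.weingarten_screen] at h
  simpa using h.symm

lemma nabla_zeta (X : H.TM) : H.nabla X H.zeta = -H.phi X := by
  ext
  have h := H.gauss X H.zeta
  rw [H.sasaki_zeta, H.phi_spec, B_zeta_right, neg_add, neg_smul] at h
  simpa using (add_right_cancel h).symm

lemma phibar_U : H.phibar H.U = H.Nt := by
  simp [H.U_spec, H.phibar_sq, H.gbar_Nt_S _ H.zeta_mem]

lemma phibar_Nt : H.phibar H.Nt = -H.U := by
  rw [H.U_spec, neg_neg]

lemma phi_U : H.phi H.U = 0 := by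
  have h := H.phi_spec H.U
  rw [phibar_U, gbar_U_V, one_smul, right_eq_add] at h
  exact Subtype.ext h

lemma gbar_phi_V (W : H.TM) : H.gbar (H.phi W) H.V = 0 := by
  have hφ := congrArg (H.gbar · H.V) (H.phi_spec W)
  have hskew := H.phibar_metric (H.phibar W) H.V
  rw [phibar_V, H.phibar_sq, gbar_V_zeta] at hskew
  simp only [gbar_xi_right, H.gbar_Nt_S _ H.V_mem, map_add, map_neg, map_smul,
    LinearMap.add_apply, LinearMap.neg_apply, LinearMap.smul_apply, smul_eq_mul, mul_zero,
    add_zero, neg_zero, sub_zero] at hφ hskew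
  rw [← hφ, hskew]

lemma phi_phi (W : H.TM) :
    H.phi (H.phi W) = -W + H.gbar W H.zeta • H.zeta + H.gbar W H.V • H.U := by
  ext
  have h := H.phibar_sq W
  rw [H.phi_spec W, map_add, map_smul, H.phi_spec (H.phi W), gbar_phi_V, zero_smul,
    add_zero, phibar_Nt] at h
  simp only [Submodule.coe_add, Submodule.coe_neg, Submodule.coe_smul]
  linear_combination (norm := module) h

lemma D_gbar_V (X Y : H.TM) :
    H.D X (H.gbar Y H.V)
      = H.gbar (H.nabla X Y) H.V - H.B X (H.phi Y) - H.tau X * H.gbar Y H.V := by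
  have hm := H.nablaBar_metric X (H.phibar Y) H.xi
  rw [eq_add_of_sub_eq (H.sasaki X Y), H.weingarten_screen, H.gauss, H.phi_spec] at hm
  simp only [map_add, map_sub, map_neg, map_smul, LinearMap.add_apply, LinearMap.sub_apply,
    LinearMap.smul_apply, smul_eq_mul, mul_one, map_zero, gbar_phibar_xi, gbar_xi_right,
    gbar_Nt_xi, H.gbar_Nt_S _ H.V_mem, gbar_Nt_Astar] at hm
  rw [H.gbar_symm _ (H.Astar X : E), gbar_Astar] at hm
  linear_combination hm

/-- `(∇_X B)(Y, Z)`, the coefficient of `N` in `(∇_X h)(Y, Z)`. -/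
def covDerivB (X Y Z : H.TM) : F :=
  H.D X (H.B Y Z) + H.B Y Z * H.tau X - H.B (H.nabla X Y) Z - H.B Y (H.nabla X Z)

lemma covDerivB_eq_zero_of_parallel
    (hpar : ∀ X Y Z : H.TM, (H.D X (H.B Y Z) + H.B Y Z * H.tau X) • H.Nt
      - H.B (H.nabla X Y) Z • H.Nt - H.B Y (H.nabla X Z) • H.Nt = 0)
    (X Y Z : H.TM) : H.covDerivB X Y Z = 0 := by
  have h := congrArg (H.gbar H.xi) (hpar X Y Z)
  simp only [map_sub, map_smul, map_zero, smul_eq_mul, H.gbar_xi_Nt, mul_one] at h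
  rw [covDerivB, ← h]

lemma covDerivB_xi (X Y : H.TM) : H.covDerivB X Y H.xi = H.B Y (H.Astar X) := by
  simp only [covDerivB, B_xi_right, nabla_xi, sub_eq_add_neg, B_add_right, B_neg_right,
    B_smul_right, map_zero]
  ring

lemma covDerivB_zeta (X Y : H.TM) :
    H.covDerivB X Y H.zeta = H.B X (H.phi Y) + H.B Y (H.phi X) := by
  simp only [covDerivB, B_zeta_right, nabla_zeta, B_neg_right, map_neg, D_gbar_V]
  ring

end SasakiLightlikeHypersurface

/-- There exists no lightlike hypersurface `(M,g)`, tangent to the structure vector field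
`ζ`, of an indefinite Sasakian manifold `(M̄, φ̄, ζ, η, ḡ)`, whose second fundamental form
`h = B ⊗ N` is parallel, i.e. such that
`(∇_X h)(Y,Z) = ∇ᵗ_X h(Y,Z) − h(∇_X Y, Z) − h(Y, ∇_X Z) = 0` for all `X, Y, Z` tangent
to `M` (since `∇ᵗ_X N = τ(X) N`, one has `∇ᵗ_X h(Y,Z) = (X⬝B(Y,Z) + B(Y,Z) τ(X)) • N`). -/
theorem no_lightlike_hypersurface_with_parallel_h
    (F : Type) [CommRing F] [Algebra ℝ F] [Nontrivial F]
    (E : Type) [AddCommGroup E] [Module F E]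
    (H : SasakiLightlikeHypersurface F E)
    (hpar : ∀ X Y Z : H.TM,
      (H.D X (H.B Y Z) + H.B Y Z * H.tau X) • H.Nt
        - H.B (H.nabla X Y) Z • H.Nt - H.B Y (H.nabla X Z) • H.Nt = 0) :
    False := by
  have hB := H.covDerivB_eq_zero_of_parallel hpar
  have hA : ∀ X Y : H.TM, H.B Y (H.Astar X) = 0 := fun X Y => by
    rw [← H.covDerivB_xi, hB]
  have hUφ : ∀ Y : H.TM, H.B H.U (H.phi Y) = 0 := fun Y => by
    simpa [H.covDerivB_zeta, H.phi_U, H.B_zero_right] using hB H.U Y H.zeta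
  set W := H.Astar H.U
  have hηW : H.gbar W H.zeta = -1 := by rw [H.gbar_Astar, H.B_zeta_right, H.gbar_U_V]
  have huW : H.gbar W H.V = 0 := by
    rw [← neg_eq_zero, ← H.B_zeta_right, H.B_symm, hA]
  have h := hUφ (H.phi W)
  rw [H.phi_phi, H.B_add_right, H.B_add_right, H.B_neg_right, H.B_smul_right,
    H.B_smul_right, hA, H.B_zeta_right, H.gbar_U_V, hηW, huW] at h
  exact one_ne_zero (by linear_combination h)
end

section
/- There exists no lightlike hypersurface (M,g), tangent to the structure vector field ζ, of an indefinite Sasakian manifold (M̄, φ̄, ζ, η, ḡ), whose local second fundamental form B is recurrent, i.e. such that there exists a 1-form β on M with (∇_X B)(Y,Z) = β(X) B(Y,Z) for all X, Y, Z tangent to M, where (∇_X B)(Y,Z) := X·B(Y,Z) − B(∇_X Y, Z) − B(Y, ∇_X Z). -/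
/-- There exists no lightlike hypersurface `(M,g)`, tangent to the structure vector field
`ζ`, of an indefinite Sasakian manifold `(M̄, φ̄, ζ, η, ḡ)`, whose local second fundamental
form `B` is recurrent, i.e. such that there is a `1`-form `β` on `M` with
`(∇_X B)(Y,Z) = X⬝B(Y,Z) − B(∇_X Y, Z) − B(Y, ∇_X Z) = β(X) B(Y,Z)` for all `X, Y, Z`
tangent to `M`. -/
theorem no_lightlike_hypersurface_with_recurrent_B
    (F : Type) [CommRing F] [Algebra ℝ F] [Nontrivial F]
    (E : Type) [AddCommGroup E] [Module F E]
    (H : SasakiLightlikeHypersurface F E)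
    (β : H.TM →ₗ[F] F)
    (hrec : ∀ X Y Z : H.TM,
      H.D X (H.B Y Z) - H.B (H.nabla X Y) Z - H.B Y (H.nabla X Z) = β X * H.B Y Z) :
    False := by
  classical
  have gsym : ∀ x y : E, H.gbar x y = H.gbar y x := H.gbar_symm
  -- basic pairings
  have hξr : ∀ Y : H.TM, H.gbar (Y : E) (H.xi : E) = 0 := fun Y => (gsym _ _).trans (H.xi_normal Y)
  have hNξ : H.gbar H.Nt (H.xi : E) = 1 := (gsym _ _).trans H.gbar_xi_Nt
  have hξζ : H.gbar (H.xi : E) (H.zeta : E) = 0 := H.xi_normal H.zeta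
  have hNζ : H.gbar H.Nt (H.zeta : E) = 0 := H.gbar_Nt_S _ H.zeta_mem
  -- L1 : B X Y = ḡ(∇̄_X Y, ξ)
  have L1 : ∀ X Y : H.TM, H.B X Y = H.gbar (H.nablaBar X (Y : E)) (H.xi : E) := by
    intro X Y
    rw [H.gauss X Y]
    simp only [map_add, map_smul, LinearMap.add_apply, LinearMap.smul_apply, smul_eq_mul]
    rw [hξr (H.nabla X Y), hNξ, mul_one, zero_add]
  -- L2 : B X Y = ḡ(A* X, Y)
  have L2 : ∀ X Y : H.TM, H.B X Y = H.gbar (H.Astar X : E) (Y : E) := by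
    intro X Y
    have hm := H.nablaBar_metric X (Y : E) (H.xi : E)
    rw [hξr Y, map_zero, H.weingarten_screen X] at hm
    simp only [map_sub, map_neg, map_smul, LinearMap.sub_apply, LinearMap.neg_apply,
      LinearMap.smul_apply, smul_eq_mul] at hm
    rw [hξr Y] at hm
    rw [L1, gsym ((H.Astar X : E)) (Y : E)]
    linear_combination -hm
  -- L3 : B is symmetric
  have L3 : ∀ X Y : H.TM, H.B X Y = H.B Y X := by
    intro X Y
    have ht := congrArg (fun z => H.gbar z (H.xi : E)) (H.nablaBar_torsion_free X Y)
    simp only [map_sub, LinearMap.sub_apply] at ht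
    rw [hξr (H.bracket X Y)] at ht
    rw [L1 X Y, L1 Y X]
    linear_combination ht
  -- derivative of constants
  have hDneg1 : ∀ X : H.TM, H.D X (-1 : F) = 0 := by
    intro X
    have h0 : H.D X ((-1 : F) + 1) = H.D X (-1 : F) + H.D X (1 : F) := map_add _ _ _
    rw [neg_add_cancel, map_zero, Derivation.map_one_eq_zero, add_zero] at h0
    exact h0.symm
  have nbar_neg : ∀ (X : H.TM) (Z : E), H.nablaBar X (-Z) = -(H.nablaBar X Z) := by
    intro X Z
    have h := H.nablaBar_leibniz X (-1 : F) Z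
    rw [neg_one_smul, hDneg1, zero_smul, zero_add, neg_one_smul] at h
    exact h
  -- a-lemma : ḡ(φ̄ w, ζ) = ḡ(w,ζ) ḡ(φ̄ ζ, ζ)
  have aLem : ∀ w : E, H.gbar (H.phibar w) (H.zeta : E)
      = H.gbar w (H.zeta : E) * H.gbar (H.phibar (H.zeta : E)) (H.zeta : E) := by
    intro w
    have h1 := H.phibar_sq (H.phibar w)
    have h2 := congrArg H.phibar (H.phibar_sq w)
    rw [map_add, map_neg, map_smul] at h2
    have h3 : H.gbar (H.phibar w) (H.zeta : E) • (H.zeta : E)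
        = H.gbar w (H.zeta : E) • H.phibar (H.zeta : E) :=
      add_left_cancel (h1.symm.trans h2)
    have h4 := congrArg (fun z => H.gbar z (H.zeta : E)) h3
    simp only [map_smul, LinearMap.smul_apply, smul_eq_mul] at h4
    rw [H.gbar_zeta_zeta, mul_one] at h4
    exact h4
  have hVs : (H.V : E) = -(H.phibar (H.xi : E)) := H.V_spec
  -- η(V) = 0
  have ηV : H.gbar (H.V : E) (H.zeta : E) = 0 := by
    have h := aLem (H.xi : E)
    rw [hξζ, zero_mul] at h
    rw [hVs, map_neg, LinearMap.neg_apply, h, neg_zero]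
  -- L7 : φ̄ V = ξ
  have L7 : H.phibar (H.V : E) = (H.xi : E) := by
    rw [hVs, map_neg, H.phibar_sq, hξζ, zero_smul, add_zero, neg_neg]
  -- L8 : B(X,ζ) = -u(X)
  have L8 : ∀ X : H.TM, H.B X H.zeta = - H.gbar (X : E) (H.V : E) := by
    intro X
    rw [L1, H.sasaki_zeta X, ← L7, map_neg, LinearMap.neg_apply, H.phibar_metric,
      ηV, mul_zero, sub_zero]
  -- L9 : u(U) = 1
  have L9 : H.gbar (H.U : E) (H.V : E) = 1 := by
    have h := H.phibar_metric H.Nt (H.xi : E)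
    rw [hNξ, hNζ, zero_mul, sub_zero] at h
    rw [H.U_spec, hVs]
    simp only [map_neg, LinearMap.neg_apply, neg_neg]
    exact h
  -- coercion of ∇_X ξ
  have hBXξ : ∀ X : H.TM, H.B X H.xi = 0 := by
    intro X; rw [L2]; exact hξr (H.Astar X)
  have hBξX : ∀ X : H.TM, H.B H.xi X = 0 := fun X => (L3 _ _).trans (hBXξ X)
  have hcoeξ : ∀ X : H.TM, ((H.nabla X H.xi : H.TM) : E)
      = -(H.Astar X : E) - H.tau X • (H.xi : E) := by
    intro X
    have hg := H.gauss X H.xi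
    rw [H.weingarten_screen X, hBXξ X, zero_smul, add_zero] at hg
    exact hg.symm
  -- L10 : ḡ(A*X, A*Z) = 0
  have L10 : ∀ X Z : H.TM, H.gbar (H.Astar X : E) (H.Astar Z : E) = 0 := by
    intro X Z
    have h := hrec X H.xi Z
    rw [hBξX Z, hBξX (H.nabla X Z), map_zero, mul_zero] at h
    have h2 : H.B (H.nabla X H.xi) Z = - H.gbar (H.Astar Z : E) (H.Astar X : E) := by
      rw [L3, L2, hcoeξ X]
      simp only [map_sub, map_neg, map_smul, smul_eq_mul]
      rw [hξr (H.Astar Z)]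
      ring
    rw [h2] at h
    rw [gsym]
    linear_combination h
  -- L11 : ḡ(A*X, V) = 0
  have L11 : ∀ X : H.TM, H.gbar (H.Astar X : E) (H.V : E) = 0 := by
    have hperp : ∀ Y : H.TM, H.gbar ((H.Astar H.zeta + H.V : H.TM) : E) (Y : E) = 0 := by
      intro Y
      have h1 : H.gbar (H.Astar H.zeta : E) (Y : E) = - H.gbar (H.V : E) (Y : E) := by
        rw [← L2, L3, L8, gsym]
      push_cast [Submodule.coe_add]
      simp only [map_add, LinearMap.add_apply]
      rw [h1]; ring
    obtain ⟨f, hf⟩ := H.xi_spans _ hperp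
    have hVeq : (H.V : E) = f • (H.xi : E) - (H.Astar H.zeta : E) := by
      have : (H.Astar H.zeta : E) + (H.V : E) = f • (H.xi : E) := by
        rw [← Submodule.coe_add]; exact hf
      linear_combination (norm := module) this
    intro X
    rw [hVeq]
    simp only [map_sub, map_smul, smul_eq_mul]
    rw [hξr (H.Astar X)]
    rw [L10 X H.zeta]
    ring
  -- L12 : ∇̄_X V = φ̄(A*X) - τ(X) V
  have L12 : ∀ X : H.TM, H.nablaBar X (H.V : E)
      = H.phibar (H.Astar X : E) - H.tau X • (H.V : E) := by
    intro X
    have hs := H.sasaki X (H.xi : E)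
    rw [H.weingarten_screen X, hξr X, hξζ, zero_smul, zero_smul, sub_zero] at hs
    have hφξ : H.phibar (H.xi : E) = -(H.V : E) := by rw [hVs, neg_neg]
    rw [map_sub, map_neg, map_smul, hφξ, nbar_neg] at hs
    linear_combination (norm := module) -hs
  -- L13 : ḡ(A*Y, φ̄(A*X)) = 0
  have hBZV : ∀ Z : H.TM, H.B Z H.V = 0 := by
    intro Z; rw [L2]; exact L11 Z
  have L13 : ∀ X Y : H.TM, H.gbar (H.Astar Y : E) (H.phibar (H.Astar X : E)) = 0 := by
    intro X Y
    have h := hrec X Y H.V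
    rw [hBZV Y, hBZV (H.nabla X Y), map_zero, mul_zero] at h
    have hcoeV : ((H.nabla X H.V : H.TM) : E)
        = H.phibar (H.Astar X : E) - H.tau X • (H.V : E) := by
      have hg := H.gauss X H.V
      rw [hBZV X, zero_smul, add_zero, L12] at hg
      exact hg.symm
    have h2 : H.B Y (H.nabla X H.V)
        = H.gbar (H.Astar Y : E) (H.phibar (H.Astar X : E)) := by
      rw [L2, hcoeV]
      simp only [map_sub, map_smul, smul_eq_mul]
      rw [L11 Y]
      ring
    rw [h2] at h
    linear_combination -h
  -- the final contradiction
  set W : H.TM := H.Astar H.U with hWdef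
  set Wp : H.TM := H.phi W with hWpdef
  have hWφ : (Wp : E) = H.phibar (W : E) := by
    have h := H.phi_spec W
    rw [L11 H.U, zero_smul, add_zero] at h
    exact h.symm
  have hBZWp : ∀ Z : H.TM, H.B Z Wp = 0 := by
    intro Z; rw [L2, hWφ]; exact L13 H.U Z
  have hBWpZ : ∀ Z : H.TM, H.B Wp Z = 0 := fun Z => (L3 _ _).trans (hBZWp Z)
  have h := hrec H.U Wp H.zeta
  rw [hBWpZ H.zeta, hBWpZ (H.nabla H.U H.zeta), map_zero, mul_zero,
    zero_sub, sub_zero] at h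
  -- h : -B(∇_U Wp, ζ) = 0
  have hcoeW : ((H.nabla H.U Wp : H.TM) : E) = H.nablaBar H.U (H.phibar (W : E)) := by
    have hg := H.gauss H.U Wp
    rw [hBZWp H.U, zero_smul, add_zero, hWφ] at hg
    exact hg.symm
  have hs := H.sasaki H.U (W : E)
  -- hs : ∇̄_U(φ̄W) - φ̄(∇̄_U W) = ḡ(U,W) ζ - ḡ(W,ζ) U
  have hWζ : H.gbar (W : E) (H.zeta : E) = -1 := by
    have := L8 H.U
    rw [L2] at this
    rw [hWdef, this, L9]
  have hφW : H.gbar (H.phibar (H.nablaBar H.U (W : E))) (H.V : E) = 0 := by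
    rw [hVs]
    simp only [map_neg]
    rw [H.phibar_metric]
    have hB : H.gbar (H.nablaBar H.U (W : E)) (H.xi : E) = 0 := by
      rw [← L1, L2, hWdef, L10]
    rw [hB, hξζ, mul_zero, sub_zero, neg_zero]
  have hval : H.gbar ((H.nabla H.U Wp : H.TM) : E) (H.V : E) = 1 := by
    rw [hcoeW]
    have hs2 : H.nablaBar H.U (H.phibar (W : E))
        = H.phibar (H.nablaBar H.U (W : E))
          + (H.gbar (H.U : E) (W : E) • (H.zeta : E) - H.gbar (W : E) (H.zeta : E) • (H.U : E)) := by
      linear_combination (norm := module) hs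
    rw [hs2]
    simp only [map_add, map_sub, map_smul, LinearMap.add_apply, LinearMap.sub_apply,
      LinearMap.smul_apply, smul_eq_mul]
    rw [hφW, hWζ, L9, gsym (H.zeta : E) (H.V : E), ηV]
    ring
  have hfinal : H.B (H.nabla H.U Wp) H.zeta = -1 := by
    rw [L8, hval]
  rw [hfinal] at h
  norm_num at h
end

section
/- There exists no lightlike hypersurface (M,g), tangent to the structure vector field ζ, of an indefinite Sasakian manifold (M̄, φ̄, ζ, η, ḡ), whose induced structure tensor φ is parallel with respect to the induced connection ∇, i.e. such that (∇_X φ)(Y) = 0 for all X, Y tangent to M. -/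
/-- There exists no lightlike hypersurface `(M,g)`, tangent to the structure vector field
`ζ`, of an indefinite Sasakian manifold `(M̄, φ̄, ζ, η, ḡ)`, whose induced structure tensor
`φ` is parallel with respect to the induced connection `∇`, i.e. such that
`(∇_X φ)(Y) = ∇_X (φY) − φ(∇_X Y) = 0` for all `X, Y` tangent to `M`. -/
theorem no_lightlike_hypersurface_with_parallel_phi
    (F : Type) [CommRing F] [Algebra ℝ F] [Nontrivial F]
    (E : Type) [AddCommGroup E] [Module F E]
    (H : SasakiLightlikeHypersurface F E)
    (hpar : ∀ X Y : H.TM, H.nabla X (H.phi Y) - H.phi (H.nabla X Y) = 0) :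
    False := by
  -- η(N) = 0
  have hNz : H.gbar H.Nt (H.zeta : E) = 0 := H.gbar_Nt_S _ H.zeta_mem
  -- ḡ(φ̄ Z, ζ) = 0 for tangent Z
  have hphizeta : ∀ Z : H.TM, H.gbar (H.phibar (Z : E)) (H.zeta : E) = 0 := by
    intro Z
    have hm := H.nablaBar_metric Z (H.zeta : E) (H.zeta : E)
    rw [H.sasaki_zeta, H.gbar_zeta_zeta] at hm
    have hD1 : H.D Z (1 : F) = 0 := Derivation.map_one_eq_zero _
    rw [hD1] at hm
    set x := H.gbar (H.phibar (Z : E)) (H.zeta : E) with hx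
    have hsymm : H.gbar (H.zeta : E) (H.phibar (Z : E)) = x := H.gbar_symm _ _
    have h2 : x + x = 0 := by
      have h0 : (0 : F) = -x + -x := by
        simpa [map_neg, LinearMap.neg_apply, hsymm] using hm
      linear_combination h0
    have h2' : (2 : F) * x = 0 := by rw [two_mul]; exact h2
    have hinv : (algebraMap ℝ F (1/2)) * (2 : F) = 1 := by
      have h2e : ((2 : F)) = algebraMap ℝ F 2 := (map_ofNat (algebraMap ℝ F) 2).symm
      rw [h2e, ← map_mul]
      norm_num
    calc x = ((algebraMap ℝ F (1/2)) * (2 : F)) * x := by rw [hinv, one_mul]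
      _ = (algebraMap ℝ F (1/2)) * ((2 : F) * x) := by ring
      _ = 0 := by rw [h2', mul_zero]
  -- scalar facts
  have hξζ : H.gbar (H.xi : E) (H.zeta : E) = 0 := H.xi_normal _
  have hNtU : H.gbar H.Nt (H.U : E) = 0 := H.gbar_Nt_S _ H.U_mem
  have hφN : H.phibar H.Nt = -(H.U : E) := by rw [H.U_spec, neg_neg]
  have hUU : H.gbar (H.U : E) (H.U : E) = 0 := by
    rw [H.U_spec]
    simp only [map_neg, LinearMap.neg_apply, neg_neg]
    rw [H.phibar_metric, H.gbar_Nt_Nt, hNz]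
    ring
  have hVU : H.gbar (H.V : E) (H.U : E) = 1 := by
    rw [H.V_spec, H.U_spec]
    simp only [map_neg, LinearMap.neg_apply, neg_neg]
    rw [H.phibar_metric, H.gbar_xi_Nt, hξζ]
    ring
  have hζV : H.gbar (H.zeta : E) (H.V : E) = 0 := by
    rw [H.V_spec]
    simp only [map_neg, LinearMap.neg_apply, neg_neg]
    rw [neg_eq_zero, H.gbar_symm]
    exact hphizeta H.xi
  -- the main consequence of parallelism, paired with U
  have main : ∀ X Y : H.TM,
      -(H.gbar (Y : E) (H.V : E) * H.gbar (H.AN X : E) (H.U : E))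
        = H.gbar (X : E) (Y : E) * H.gbar (H.zeta : E) (H.U : E)
          - H.gbar (Y : E) (H.zeta : E) * H.gbar (X : E) (H.U : E) := by
    intro X Y
    have hpp : H.nabla X (H.phi Y) = H.phi (H.nabla X Y) := by
      have := hpar X Y
      exact sub_eq_zero.mp this
    have e1 : H.nablaBar X (H.phibar (Y : E))
        = ((H.nabla X (H.phi Y) : E) + H.B X (H.phi Y) • H.Nt)
          + (H.D X (H.gbar (Y : E) (H.V : E)) • H.Nt
            + H.gbar (Y : E) (H.V : E) • (-(H.AN X : E) + H.tau X • H.Nt)) := by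
      rw [H.phi_spec Y, H.nablaBar_add', H.nablaBar_leibniz, H.gauss, H.weingarten]
    have e2 : H.phibar (H.nablaBar X (Y : E))
        = ((H.phi (H.nabla X Y) : E) + H.gbar (H.nabla X Y : E) (H.V : E) • H.Nt)
          + H.B X Y • -(H.U : E) := by
      rw [H.gauss, map_add, map_smul, H.phi_spec, hφN]
    have hs := H.sasaki X (Y : E)
    rw [e1, e2, hpp] at hs
    have hu := congrArg (fun z => H.gbar z (H.U : E)) hs
    simp only [map_add, map_sub, map_smul, map_neg, LinearMap.add_apply,
      LinearMap.sub_apply, LinearMap.smul_apply, LinearMap.neg_apply, smul_eq_mul] at hu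
    rw [hNtU, hUU] at hu
    linear_combination hu
  have h1 := main H.V H.zeta
  rw [hζV, H.gbar_zeta_zeta] at h1
  have hVζ : H.gbar (H.V : E) (H.zeta : E) = 0 := by rw [H.gbar_symm]; exact hζV
  have hζVsym : H.gbar (H.zeta : E) (H.V : E) = 0 := hζV
  rw [hVζ] at h1
  -- h1 : -(0 * _) = 0 * gbar ζ U - 1 * gbar V U
  rw [hVU] at h1
  have hone : (1 : F) = 0 := by linear_combination h1
  exact one_ne_zero hone
end

section
/- There exists no lightlike hypersurface (M,g), tangent to the structure vector field ζ, of an indefinite Sasakian manifold (M̄, φ̄, ζ, η, ḡ), on which the vector field U = −φ̄N is parallel with respect to the induced connection ∇, i.e. such that ∇_X U = 0 for all X tangent to M. -/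
/-- There exists no lightlike hypersurface `(M,g)`, tangent to the structure vector field
`(H.zeta : E)`, of an indefinite Sasakian manifold `(M̄, φ̄, (H.zeta : E), η, ḡ)`, on which the vector field
`U = −φ̄N` is parallel with respect to the induced connection `∇`, i.e. such that
`∇_X U = 0` for all `X` tangent to `M`. -/
theorem no_lightlike_hypersurface_with_parallel_U
    (F : Type) [CommRing F] [Algebra ℝ F] [Nontrivial F]
    (E : Type) [AddCommGroup E] [Module F E]
    (H : SasakiLightlikeHypersurface F E)
    (hpar : ∀ X : H.TM, H.nabla X H.U = 0) :
    False := by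

  classical
  -- halving lemma in F
  have half : ∀ a : F, a + a = 0 → a = 0 := by
    intro a h
    have h2 : (2 : ℝ) • a = 0 := by rw [two_smul]; exact h
    have : a = (2⁻¹ : ℝ) • ((2 : ℝ) • a) := by
      rw [smul_smul]; norm_num
    rw [this, h2, smul_zero]
  -- nablaBar kills 0 and commutes with negation
  have nB_zero : ∀ X : H.TM, H.nablaBar X (0 : E) = 0 := by
    intro X
    have h := H.nablaBar_add' X 0 0
    rw [add_zero] at h
    have h' : H.nablaBar X (0 : E) + 0 = H.nablaBar X 0 + H.nablaBar X 0 := by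
      rw [add_zero]; exact h
    exact (add_left_cancel h').symm
  have nB_neg : ∀ (X : H.TM) (Y : E), H.nablaBar X (-Y) = -(H.nablaBar X Y) := by
    intro X Y
    have h := H.nablaBar_add' X Y (-Y)
    rw [add_neg_cancel, nB_zero] at h
    exact (eq_neg_of_add_eq_zero_right h.symm)
  -- ḡ(φ̄X, (H.zeta : E)) = 0 for all tangent X
  have hφzeta : ∀ X : H.TM, H.gbar (H.phibar (X : E)) (H.zeta : E) = 0 := by
    intro X
    have hm := H.nablaBar_metric X (H.zeta : E) (H.zeta : E)
    rw [H.sasaki_zeta] at hm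
    rw [H.gbar_zeta_zeta] at hm
    have h1 : (H.D X) (1 : F) = 0 := Derivation.map_one_eq_zero _
    rw [h1] at hm
    have hsymm : H.gbar (H.zeta : E) (-(H.phibar (X : E))) = H.gbar (-(H.phibar (X : E))) (H.zeta : E) :=
      H.gbar_symm _ _
    rw [hsymm] at hm
    simp only [map_neg, LinearMap.neg_apply] at hm
    have : H.gbar (H.phibar (X : E)) (H.zeta : E) + H.gbar (H.phibar (X : E)) (H.zeta : E) = 0 := by
      linear_combination hm
    exact half _ this
  -- basic scalar values
  have hNzeta : H.gbar H.Nt (H.zeta : E) = 0 := H.gbar_Nt_S _ H.zeta_mem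
  have hNV : H.gbar H.Nt (H.V : E) = 0 := H.gbar_Nt_S _ H.V_mem
  have hξzeta : H.gbar (H.xi : E) (H.zeta : E) = 0 := H.xi_normal H.zeta
  have hξV : H.gbar (H.xi : E) (H.V : E) = 0 := H.xi_normal H.V
  have hzetaV : H.gbar (H.zeta : E) (H.V : E) = 0 := by
    rw [H.V_spec]
    have : H.gbar (H.zeta : E) (-(H.phibar (H.xi : E))) = -(H.gbar (H.phibar (H.xi : E)) (H.zeta : E)) := by
      rw [H.gbar_symm]; simp [map_neg, LinearMap.neg_apply]
    rw [this, hφzeta, neg_zero]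
  have hNξ : H.gbar H.Nt (H.xi : E) = 1 := by rw [H.gbar_symm]; exact H.gbar_xi_Nt
  have hφAzeta : H.gbar (H.phibar (H.AN H.xi : E)) (H.zeta : E) = 0 := hφzeta _
  have hAξ : H.gbar ((H.AN H.xi : E)) (H.xi : E) = 0 := by
    rw [H.gbar_symm]; exact H.xi_normal _
  have hφAV : H.gbar (H.phibar (H.AN H.xi : E)) (H.V : E) = 0 := by
    rw [H.V_spec]
    have : H.gbar (H.phibar (H.AN H.xi : E)) (-(H.phibar (H.xi : E)))
        = -(H.gbar (H.phibar (H.AN H.xi : E)) (H.phibar (H.xi : E))) := by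
      simp [map_neg]
    rw [this, H.phibar_metric, hAξ]
    rw [show H.gbar ((H.AN H.xi : E)) (H.zeta : E) * H.gbar ((H.xi : E)) (H.zeta : E)
        = H.gbar ((H.AN H.xi : E)) (H.zeta : E) * H.gbar ((H.xi : E)) (H.zeta : E) from rfl, hξzeta]
    ring
  have hUV : H.gbar (H.U : E) (H.V : E) = 1 := by
    rw [H.U_spec, H.V_spec]
    have : H.gbar (-(H.phibar H.Nt)) (-(H.phibar (H.xi : E)))
        = H.gbar (H.phibar H.Nt) (H.phibar (H.xi : E)) := by
      simp [map_neg, LinearMap.neg_apply]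
    rw [this, H.phibar_metric]
    rw [show H.gbar H.Nt (H.zeta : E) * H.gbar ((H.xi : E)) (H.zeta : E)
        = H.gbar H.Nt (H.zeta : E) * H.gbar ((H.xi : E)) (H.zeta : E) from rfl, hNzeta, hNξ]
    ring
  -- Gauss equation with the parallelism hypothesis
  have e3 : H.nablaBar H.xi (H.U : E) = H.B H.xi H.U • H.Nt := by
    have h := H.gauss H.xi H.U
    rw [hpar H.xi] at h
    simpa using h
  have e4 : H.phibar H.Nt = -(H.U : E) := by rw [H.U_spec, neg_neg]
  have e5 : H.nablaBar H.xi (H.phibar H.Nt) = -(H.B H.xi H.U • H.Nt) := by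
    rw [e4, nB_neg, e3]
  have e6 : H.phibar (H.nablaBar H.xi H.Nt)
      = -(H.phibar (H.AN H.xi : E)) + H.tau H.xi • -(H.U : E) := by
    rw [H.weingarten]
    rw [map_add, map_neg, map_smul, e4]
  have key := H.sasaki H.xi H.Nt
  rw [e5, e6] at key
  -- pair the key identity with V : τ(ξ) = 0
  have pairV := congrArg (fun w => H.gbar w (H.V : E)) key
  simp only [map_sub, map_add, map_neg, map_smul, LinearMap.sub_apply,
    LinearMap.add_apply, LinearMap.neg_apply, LinearMap.smul_apply, smul_eq_mul] at pairV
  rw [hNV, hφAV, hUV, hzetaV, hξV] at pairV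
  have hτ : H.tau H.xi = 0 := by linear_combination pairV
  -- pair the key identity with (H.zeta : E) : 0 = 1
  have pairζfix := congrArg (fun w => H.gbar w (H.zeta : E)) key
  simp only [map_sub, map_add, map_neg, map_smul, LinearMap.sub_apply,
    LinearMap.add_apply, LinearMap.neg_apply, LinearMap.smul_apply, smul_eq_mul] at pairζfix
  rw [hNzeta, hφAzeta, hτ, hξzeta] at pairζfix
  rw [H.gbar_zeta_zeta, H.gbar_xi_Nt] at pairζfix
  have : (1 : F) = 0 := by linear_combination -pairζfix
  exact one_ne_zero this
end

section
/- There exists no lightlike hypersurface (M,g), tangent to the structure vector field ζ, of an indefinite Sasakian manifold (M̄, φ̄, ζ, η, ḡ), on which the vector field V = −φ̄ξ is parallel with respect to the induced connection ∇, i.e. such that ∇_X V = 0 for all X tangent to M. -/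
/-- There exists no lightlike hypersurface `(M,g)`, tangent to the structure vector field
`ζ`, of an indefinite Sasakian manifold `(M̄, φ̄, ζ, η, ḡ)`, on which the vector field
`V = −φ̄ξ` is parallel with respect to the induced connection `∇`, i.e. such that
`∇_X V = 0` for all `X` tangent to `M`. -/
theorem no_lightlike_hypersurface_with_parallel_V
    (F : Type) [CommRing F] [Algebra ℝ F] [Nontrivial F]
    (E : Type) [AddCommGroup E] [Module F E]
    (H : SasakiLightlikeHypersurface F E)
    (hpar : ∀ X : H.TM, H.nabla X H.V = 0) :
    False := by
  -- η(ξ) = 0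
  have hxz : H.gbar (H.xi : E) (H.zeta : E) = 0 := H.xi_normal H.zeta
  -- B is symmetric
  have B_sym : ∀ X Y : H.TM, H.B X Y = H.B Y X := by
    intro X Y
    have h := H.nablaBar_torsion_free X Y
    rw [H.gauss X Y, H.gauss Y X] at h
    have h2 := congrArg (fun z => H.gbar (H.xi : E) z) h
    simp only [map_add, map_sub, map_smul, H.xi_normal, H.gbar_xi_Nt, smul_eq_mul,
      mul_one] at h2
    linear_combination h2
  -- B X Y = ḡ(A*X, Y)
  have B_eq : ∀ X Y : H.TM, H.gbar (H.Astar X : E) (Y : E) = H.B X Y := by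
    intro X Y
    have h := H.nablaBar_metric X (H.xi : E) (Y : E)
    rw [H.xi_normal Y, H.weingarten_screen X, H.gauss X Y] at h
    have h0 : (H.D X) (0 : F) = 0 := map_zero _
    rw [h0] at h
    simp only [map_add, map_sub, map_neg, map_smul, LinearMap.sub_apply,
      LinearMap.neg_apply, LinearMap.add_apply, LinearMap.smul_apply,
      H.xi_normal, H.gbar_xi_Nt, smul_eq_mul, mul_one, mul_zero] at h
    linear_combination h
  -- φ̄ V = ξ
  have hphiV : H.phibar (H.V : E) = (H.xi : E) := by
    rw [H.V_spec, map_neg, H.phibar_sq, hxz]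
    simp
  -- φ̄ U = N - ḡ(N,ζ) • ζ
  have hphiU : H.phibar (H.U : E) = H.Nt - H.gbar H.Nt (H.zeta : E) • (H.zeta : E) := by
    rw [H.U_spec, map_neg, H.phibar_sq]
    simp [sub_eq_add_neg, add_comm]
  -- B(U,ζ) = -1
  have hBUz : H.B H.U H.zeta = -1 := by
    have h := H.sasaki_zeta H.U
    rw [H.gauss H.U H.zeta, hphiU] at h
    have h2 := congrArg (fun z => H.gbar (H.xi : E) z) h
    simp only [map_add, map_sub, map_neg, map_smul, H.xi_normal, H.gbar_xi_Nt, hxz,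
      smul_eq_mul, mul_one, mul_zero] at h2
    linear_combination h2
  -- B(V,ζ) = 0
  have hBVz : H.B H.V H.zeta = 0 := by
    have h := H.sasaki_zeta H.V
    rw [H.gauss H.V H.zeta, hphiV] at h
    have h2 := congrArg (fun z => H.gbar (H.xi : E) z) h
    simp only [map_add, map_neg, map_smul, H.xi_normal, H.gbar_xi_Nt,
      smul_eq_mul, mul_one] at h2
    linear_combination h2
  -- using parallelism: ∇̄_ζ V = 0
  have hzV : H.nablaBar H.zeta (H.V : E) = 0 := by
    have hB : H.B H.zeta H.V = 0 := by rw [B_sym]; exact hBVz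
    rw [H.gauss H.zeta H.V, hpar H.zeta, hB]
    simp
  -- hence ∇̄_ζ ξ = 0
  have hzxi : H.nablaBar H.zeta (H.xi : E) = 0 := by
    have h := H.sasaki H.zeta (H.V : E)
    rw [hphiV, hzV, map_zero, H.gbar_symm (H.V : E) (H.zeta : E)] at h
    simpa using h
  -- hence ḡ(A*ζ, U) = 0
  have h := H.weingarten_screen H.zeta
  rw [hzxi] at h
  have h2 := congrArg (fun z => H.gbar z (H.U : E)) h
  simp only [map_zero, map_sub, map_neg, map_smul, LinearMap.sub_apply,
    LinearMap.neg_apply, LinearMap.smul_apply, LinearMap.zero_apply,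
    H.xi_normal, smul_eq_mul, mul_zero] at h2
  -- conclude: -1 = B(U,ζ) = B(ζ,U) = ḡ(A*ζ,U) = 0
  have : (-1 : F) = 0 := by
    rw [← hBUz, B_sym H.U H.zeta, ← B_eq H.zeta H.U]
    linear_combination h2
  have h1 : (1 : F) ≠ 0 := one_ne_zero
  exact h1 (by linear_combination -this)
end

section
/- There exists no lightlike hypersurface (M,g), tangent to the structure vector field ζ, of an indefinite Sasakian manifold (M̄, φ̄, ζ, η, ḡ), whose induced structure tensor φ is recurrent, i.e. such that there exists a 1-form ω on M with (∇_X φ)(Y) = ω(X) φY for all X, Y tangent to M. -/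
/-- There exists no lightlike hypersurface `(M,g)`, tangent to the structure vector field
`ζ`, of an indefinite Sasakian manifold `(M̄, φ̄, ζ, η, ḡ)`, whose induced structure tensor
`φ` is recurrent, i.e. such that there is a `1`-form `ω` on `M` with
`(∇_X φ)(Y) = ∇_X (φY) − φ(∇_X Y) = ω(X) φY` for all `X, Y` tangent to `M`. -/
theorem no_lightlike_hypersurface_with_recurrent_phi
    (F : Type) [CommRing F] [Algebra ℝ F] [Nontrivial F]
    (E : Type) [AddCommGroup E] [Module F E]
    (H : SasakiLightlikeHypersurface F E)
    (ω : H.TM →ₗ[F] F)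
    (hrec : ∀ X Y : H.TM, H.nabla X (H.phi Y) - H.phi (H.nabla X Y) = ω X • H.phi Y) :
    False := by
  classical
  -- basic scalar facts
  have hgξN : H.gbar (H.xi : E) H.Nt = 1 := H.gbar_xi_Nt
  have hgNξ : H.gbar H.Nt (H.xi : E) = 1 := by rw [H.gbar_symm]; exact hgξN
  have hgξζ : H.gbar (H.xi : E) (H.zeta : E) = 0 := H.xi_normal H.zeta
  have hgξV : H.gbar (H.xi : E) (H.V : E) = 0 := H.xi_normal H.V
  have hgξξ : H.gbar (H.xi : E) (H.xi : E) = 0 := H.xi_normal H.xi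
  have hgNU : H.gbar H.Nt (H.U : E) = 0 := H.gbar_Nt_S _ H.U_mem
  have hgUN : H.gbar (H.U : E) H.Nt = 0 := by rw [H.gbar_symm]; exact hgNU
  have hgNN : H.gbar H.Nt H.Nt = 0 := H.gbar_Nt_Nt
  -- φ̄ N = -U, φ ξ = -V
  have hφN : H.phibar H.Nt = -(H.U : E) := by rw [H.U_spec, neg_neg]
  have hφξ : (H.phi H.xi : E) = -(H.V : E) := by
    have h := H.phi_spec H.xi
    rw [hgξV, zero_smul, add_zero] at h
    rw [← h, H.V_spec, neg_neg]
  -- ḡ(V,U) = 1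
  have hgVU : H.gbar (H.V : E) (H.U : E) = 1 := by
    rw [H.V_spec, H.U_spec]
    simp only [map_neg, LinearMap.neg_apply, neg_neg]
    rw [H.phibar_metric, hgξζ, hgξN, zero_mul, sub_zero]
  -- B(X,ξ) = 0 for all X
  have hBξ : ∀ X : H.TM, H.B X H.xi = 0 := by
    intro X
    have h1 := congrArg (fun e => H.gbar e (H.xi : E)) (H.gauss X H.xi)
    have h2 := congrArg (fun e => H.gbar e (H.xi : E)) (H.weingarten_screen X)
    simp only [map_add, map_sub, map_neg, map_smul, LinearMap.add_apply,
      LinearMap.sub_apply, LinearMap.neg_apply, LinearMap.smul_apply,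
      smul_eq_mul] at h1 h2
    have e1 : H.gbar (H.nabla X H.xi : E) (H.xi : E) = 0 := by
      rw [H.gbar_symm]; exact H.xi_normal _
    have e2 : H.gbar (H.Astar X : E) (H.xi : E) = 0 := by
      rw [H.gbar_symm]; exact H.xi_normal _
    rw [hgNξ, mul_one, e1, zero_add] at h1
    rw [e2, hgξξ, mul_zero, neg_zero, zero_sub, neg_zero] at h2
    rw [h2] at h1
    exact h1.symm
  -- ḡ(ζ, V) = 0
  have hgζV : H.gbar (H.zeta : E) (H.V : E) = 0 := by
    have hVeq : H.nablaBar H.xi (H.zeta : E) = (H.V : E) := by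
      rw [H.sasaki_zeta, H.V_spec]
    have h := H.nablaBar_metric H.xi (H.zeta : E) (H.zeta : E)
    rw [H.gbar_zeta_zeta, Derivation.map_one_eq_zero, hVeq] at h
    have h2 : H.gbar (H.zeta : E) (H.V : E) + H.gbar (H.zeta : E) (H.V : E) = 0 := by
      rw [H.gbar_symm (H.V : E) (H.zeta : E)] at h
      linear_combination -h
    have h3 : (2 : ℝ) • H.gbar (H.zeta : E) (H.V : E) = 0 := by
      rw [two_smul]; exact h2
    calc H.gbar (H.zeta : E) (H.V : E)
        = ((1/2 : ℝ) * 2) • H.gbar (H.zeta : E) (H.V : E) := by norm_num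
      _ = (1/2 : ℝ) • ((2:ℝ) • H.gbar (H.zeta : E) (H.V : E)) := by rw [mul_smul]
      _ = 0 := by rw [h3, smul_zero]
  -- the key tangential equation
  have key : ∀ X Y : H.TM,
      ω X • (H.phi Y : E)
        + (H.B X (H.phi Y) + H.D X (H.gbar (Y : E) (H.V : E))
            + H.gbar (Y : E) (H.V : E) * H.tau X
            - H.gbar (H.nabla X Y : E) (H.V : E)) • H.Nt
      = H.gbar (Y : E) (H.V : E) • (H.AN X : E) - H.B X Y • (H.U : E)
          + H.gbar (X : E) (Y : E) • (H.zeta : E)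
          - H.gbar (Y : E) (H.zeta : E) • (X : E) := by
    intro X Y
    have hs := H.sasaki X (Y : E)
    rw [H.phi_spec Y, H.nablaBar_add', H.nablaBar_leibniz, H.gauss X (H.phi Y),
      H.weingarten X, H.gauss X Y, map_add, map_smul, H.phi_spec (H.nabla X Y),
      hφN] at hs
    have hco : (H.nabla X (H.phi Y) : E) - (H.phi (H.nabla X Y) : E)
        = ω X • (H.phi Y : E) := by
      have h := congrArg (Subtype.val) (hrec X Y)
      simpa using h
    linear_combination (norm := module) hs - hco
  -- ω(ξ) = 0
  have hωξ : ω H.xi = 0 := by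
    have h := key H.xi H.xi
    rw [hgξV, hφξ, hBξ, hgξζ, hgξξ] at h
    have h2 := congrArg (fun e => H.gbar e (H.U : E)) h
    simp only [map_add, map_sub, map_neg, map_smul, LinearMap.add_apply,
      LinearMap.sub_apply, LinearMap.neg_apply, LinearMap.smul_apply,
      smul_eq_mul, zero_mul, zero_smul, smul_zero, zero_add, add_zero,
      sub_zero, zero_sub, map_zero, Derivation.map_zero, LinearMap.zero_apply] at h2
    rw [hgVU, hgNU] at h2
    linear_combination -h2
  -- the contradiction, from (X,Y) = (ξ,ζ)
  have h := key H.xi H.zeta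
  rw [hgζV, hgξζ, hωξ, H.gbar_zeta_zeta] at h
  have h2 := congrArg (fun e => H.gbar e H.Nt) h
  simp only [map_add, map_sub, map_neg, map_smul, LinearMap.add_apply,
    LinearMap.sub_apply, LinearMap.neg_apply, LinearMap.smul_apply,
    smul_eq_mul, zero_mul, zero_smul, smul_zero, zero_add, add_zero,
    sub_zero, zero_sub, map_zero, Derivation.map_zero, LinearMap.zero_apply,
    one_smul, one_mul] at h2
  rw [hgNN, hgUN, hgξN] at h2
  have : (1 : F) = 0 := by linear_combination h2
  exact one_ne_zero this
end

section
/- There exists no lightlike hypersurface (M,g), tangent to the structure vector field ζ, of an indefinite Sasakian manifold (M̄, φ̄, ζ, η, ḡ), such that the distribution D' = φ̄tr(TM) (spanned by U = −φ̄N) is a Killing distribution, i.e. such that the Lie derivative L_U g vanishes identically. -/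
/-- There exists no lightlike hypersurface `(M,g)`, tangent to the structure vector field
`ζ`, of an indefinite Sasakian manifold `(M̄, φ̄, ζ, η, ḡ)`, such that the distribution
`D' = φ̄ tr(TM)`, spanned by `U = −φ̄N`, is a Killing distribution, i.e. such that the Lie
derivative `(L_U g)(X,Y) = U⬝g(X,Y) − g([U,X],Y) − g(X,[U,Y])` vanishes identically. -/
theorem no_lightlike_hypersurface_with_Killing_Dprime
    (F : Type) [CommRing F] [Algebra ℝ F] [Nontrivial F]
    (E : Type) [AddCommGroup E] [Module F E]
    (H : SasakiLightlikeHypersurface F E)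
    (hKilling : ∀ X Y : H.TM,
      H.D H.U (H.gbar (X : E) (Y : E))
        - H.gbar ((H.bracket H.U X : H.TM) : E) (Y : E)
        - H.gbar (X : E) ((H.bracket H.U Y : H.TM) : E) = 0) :
    False := by
  classical
  -- `2` is a unit in `F`
  have two_unit : IsUnit (2 : F) := by
    have h := (algebraMap ℝ F).isUnit_map (isUnit_iff_ne_zero.mpr (two_ne_zero (α := ℝ)))
    rwa [map_ofNat] at h
  -- the connection sends `0` to `0` and commutes with negation
  have nb_zero : ∀ X : H.TM, H.nablaBar X (0 : E) = 0 := by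
    intro X
    have h := H.nablaBar_add' X 0 0
    rw [add_zero] at h
    exact (left_eq_add.mp h)
  have nb_neg : ∀ (X : H.TM) (Y : E), H.nablaBar X (-Y) = -(H.nablaBar X Y) := by
    intro X Y
    have h := H.nablaBar_add' X Y (-Y)
    rw [add_neg_cancel, nb_zero X] at h
    exact (neg_eq_of_add_eq_zero_right h.symm).symm
  -- basic values of the metric
  have hξζ : H.gbar (H.xi : E) (H.zeta : E) = 0 := H.xi_normal H.zeta
  have hζξ : H.gbar (H.zeta : E) (H.xi : E) = 0 := by rw [H.gbar_symm]; exact hξζ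
  have hNζ : H.gbar H.Nt (H.zeta : E) = 0 := H.gbar_Nt_S _ H.zeta_mem
  have hζN : H.gbar (H.zeta : E) H.Nt = 0 := by rw [H.gbar_symm]; exact hNζ
  have hξU : H.gbar (H.xi : E) (H.U : E) = 0 := H.xi_normal H.U
  have hUξ : H.gbar (H.U : E) (H.xi : E) = 0 := by rw [H.gbar_symm]; exact hξU
  have hNξ : H.gbar H.Nt (H.xi : E) = 1 := by rw [H.gbar_symm]; exact H.gbar_xi_Nt
  -- `φ̄ N = -U` and `φ̄ U = N`
  have hphiN : H.phibar H.Nt = -(H.U : E) := by rw [H.U_spec, neg_neg]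
  have hphiU : H.phibar (H.U : E) = H.Nt := by
    rw [H.U_spec, map_neg, H.phibar_sq, hNζ, zero_smul, add_zero, neg_neg]
  -- `η(U) = 0`
  have hUζ : H.gbar (H.U : E) (H.zeta : E) = 0 := by
    have h := H.phibar_sq (H.U : E)
    rw [hphiU, hphiN] at h
    have h2 := left_eq_add.mp h
    have h3 := congrArg (fun z : E => H.gbar z (H.zeta : E)) h2
    simpa [map_smul, H.gbar_zeta_zeta] using h3
  -- `ḡ(φ̄ X, ζ) = 0` for every tangent `X`
  have hphiTMζ : ∀ X : H.TM, H.gbar (H.phibar (X : E)) (H.zeta : E) = 0 := by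
    intro X
    have hm := H.nablaBar_metric X (H.zeta : E) (H.zeta : E)
    rw [H.gbar_zeta_zeta, H.sasaki_zeta, Derivation.map_one_eq_zero] at hm
    simp only [map_neg, LinearMap.neg_apply] at hm
    have hsym := H.gbar_symm (H.zeta : E) (H.phibar (X : E))
    have h2 : (2 : F) * H.gbar (H.phibar (X : E)) (H.zeta : E) = 0 := by
      linear_combination hm - hsym
    exact (two_unit.mul_right_eq_zero).mp h2
  -- the key formula for `∇̄_X U`
  have hnU : ∀ X : H.TM, H.nablaBar X (H.U : E)
      = H.phibar (H.AN X : E) + H.tau X • (H.U : E)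
        - H.gbar (X : E) H.Nt • (H.zeta : E) := by
    intro X
    have hs := H.sasaki X H.Nt
    rw [H.weingarten X, hNζ] at hs
    have hphi : H.phibar (-(H.AN X : E) + H.tau X • H.Nt)
        = -(H.phibar (H.AN X : E)) + H.tau X • H.phibar H.Nt := by
      rw [map_add, map_neg, map_smul]
    rw [hphi] at hs
    have hs2 := eq_add_of_sub_eq hs
    have hU' : (H.U : E) = -(H.phibar H.Nt) := H.U_spec
    rw [hU', nb_neg, hs2, hphiN]
    module
  -- the Killing hypothesis, rewritten with `∇̄`
  have hkey : ∀ X Y : H.TM,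
      H.gbar (H.nablaBar X (H.U : E)) (Y : E)
        + H.gbar (X : E) (H.nablaBar Y (H.U : E)) = 0 := by
    intro X Y
    have hk := hKilling X Y
    have hm := H.nablaBar_metric H.U (X : E) (Y : E)
    have hbX := H.nablaBar_torsion_free H.U X
    have hbY := H.nablaBar_torsion_free H.U Y
    rw [hm, ← hbX, ← hbY] at hk
    simp only [map_sub, LinearMap.sub_apply] at hk
    linear_combination hk
  have hζNt : H.gbar (H.zeta : E) H.Nt = 0 := hζN
  -- Killing at `(ξ, ζ)` gives `u(A_N ζ) = 1`
  have hA : H.gbar (H.AN H.zeta : E) (H.V : E) = 1 := by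
    have hk := hkey H.xi H.zeta
    rw [hnU H.xi, hnU H.zeta, H.phi_spec (H.AN H.zeta)] at hk
    simp only [map_add, map_sub, map_smul, map_neg, LinearMap.add_apply,
      LinearMap.sub_apply, LinearMap.smul_apply, LinearMap.neg_apply, smul_eq_mul] at hk
    rw [hphiTMζ (H.AN H.xi), hUζ, H.gbar_xi_Nt, H.gbar_zeta_zeta, hξU, hξζ, hζNt,
      H.xi_normal (H.phi (H.AN H.zeta))] at hk
    linear_combination hk
  -- symmetry of the second fundamental form gives `u(A_N ζ) = -1`
  have hB : H.gbar (H.AN H.zeta : E) (H.V : E) = -1 := by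
    have hb := H.nablaBar_torsion_free H.zeta H.U
    have h0 : H.gbar ((H.bracket H.zeta H.U : H.TM) : E) (H.xi : E) = 0 := by
      rw [H.gbar_symm]; exact H.xi_normal _
    have ht : H.gbar (H.nablaBar H.zeta (H.U : E)) (H.xi : E)
        = H.gbar (H.AN H.zeta : E) (H.V : E) := by
      rw [hnU H.zeta, H.phi_spec (H.AN H.zeta)]
      simp only [map_add, map_sub, map_smul, LinearMap.add_apply,
        LinearMap.sub_apply, LinearMap.smul_apply, smul_eq_mul]
      rw [hNξ, hUξ, hζξ]
      have hφξ : H.gbar (H.phi (H.AN H.zeta) : E) (H.xi : E) = 0 := by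
        rw [H.gbar_symm]; exact H.xi_normal _
      rw [hφξ]
      ring
    have hs : H.gbar (H.nablaBar H.U (H.zeta : E)) (H.xi : E) = -1 := by
      rw [H.sasaki_zeta, hphiU]
      simp [hNξ]
    have hcast := congrArg (fun z : E => H.gbar z (H.xi : E)) hb
    simp only [map_sub, LinearMap.sub_apply] at hcast
    rw [ht, hs, h0] at hcast
    linear_combination hcast
  have h2 : (2 : F) = 0 := by linear_combination hB - hA
  exact two_unit.ne_zero h2
end

section
/- Let (M,g) be a lightlike hypersurface of a semi-Riemannian manifold (M̄, ḡ). If either the second fundamental form h or the local second fundamental form B of M is parallel, then the screen shape operator A*_ξ satisfies A*_ξ(A*_ξ X) = 0 for every X tangent to M. -/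
/-- An algebraic model, at the level of (local) smooth functions and vector fields, of a
lightlike hypersurface `(M,g)` of a semi-Riemannian manifold `(M̄,ḡ)`, together with a
chosen screen distribution `S(TM)`, a (local) section `ξ` of the rank-one normal bundle
`TM⊥ ⊆ TM`, the associated null transversal section `N`, and the induced objects of the
Gauss–Weingarten equations.

* `F` models the commutative `ℝ`-algebra of smooth functions on (an open subset of) `M`;
* `E` models the `F`-module of sections of the ambient tangent bundle `TM̄` restricted to `M`. -/
structure LightlikeHypersurface (F : Type) [CommRing F] [Algebra ℝ F]
    (E : Type) [AddCommGroup E] [Module F E] where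
  /-- the submodule of vector fields tangent to the hypersurface `M` -/
  TM : Submodule F E
  /-- the ambient metric `ḡ` (whose restriction to `TM` is the degenerate induced metric `g`) -/
  gbar : E →ₗ[F] E →ₗ[F] F
  gbar_symm : ∀ X Y : E, gbar X Y = gbar Y X
  /-- the directional derivative `X ⬝ f` of functions along tangent vector fields -/
  D : TM → Derivation ℝ F F
  D_add : ∀ X Y : TM, D (X + Y) = D X + D Y
  D_smul : ∀ (f : F) (X : TM) (k : F), D (f • X) k = f * D X k
  /-- the Lie bracket of vector fields tangent to `M` -/
  bracket : TM → TM → TM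
  D_bracket : ∀ (X Y : TM) (f : F), D (bracket X Y) f = D X (D Y f) - D Y (D X f)
  /-- the ambient Levi-Civita connection `∇̄`, in directions tangent to `M` -/
  nablaBar : TM → E → E
  nablaBar_add : ∀ (X Y : TM) (Z : E), nablaBar (X + Y) Z = nablaBar X Z + nablaBar Y Z
  nablaBar_smul : ∀ (f : F) (X : TM) (Z : E), nablaBar (f • X) Z = f • nablaBar X Z
  nablaBar_add' : ∀ (X : TM) (Y Z : E), nablaBar X (Y + Z) = nablaBar X Y + nablaBar X Z
  nablaBar_leibniz : ∀ (X : TM) (f : F) (Y : E),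
    nablaBar X (f • Y) = D X f • Y + f • nablaBar X Y
  nablaBar_metric : ∀ (X : TM) (Y Z : E),
    D X (gbar Y Z) = gbar (nablaBar X Y) Z + gbar Y (nablaBar X Z)
  nablaBar_torsion_free : ∀ X Y : TM,
    nablaBar X (Y : E) - nablaBar Y (X : E) = (bracket X Y : E)
  /-- a (local) section `ξ` of the rank-one lightlike normal bundle `TM⊥ ⊆ TM` -/
  xi : TM
  xi_normal : ∀ Y : TM, gbar (xi : E) (Y : E) = 0
  xi_spans : ∀ X : TM, (∀ Y : TM, gbar (X : E) (Y : E) = 0) →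
    ∃ f : F, (X : E) = f • (xi : E)
  /-- the screen distribution `S(TM)`, a nondegenerate complement of `TM⊥` in `TM` -/
  S : Submodule F E
  S_le : S ≤ TM
  S_compl : ∀ X : TM, ∃ W ∈ S, ∃ f : F, (X : E) = W + f • (xi : E)
  S_nondeg : ∀ W ∈ S, (∀ Z ∈ S, gbar W Z = 0) → W = 0
  /-- the null transversal section `N`, with `ḡ(ξ,N) = 1`, `ḡ(N,N) = 0`, `ḡ(N, S(TM)) = 0` -/
  Nt : E
  gbar_xi_Nt : gbar (xi : E) Nt = 1
  gbar_Nt_Nt : gbar Nt Nt = 0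
  gbar_Nt_S : ∀ Z ∈ S, gbar Nt Z = 0
  /-- the induced connection `∇` on `M` -/
  nabla : TM → TM → TM
  /-- the local second fundamental form `B` of `M` (the second fundamental form being
  `h(X,Y) = B(X,Y) N`) -/
  B : TM → TM → F
  /-- Gauss equation: `∇̄_X Y = ∇_X Y + B(X,Y) N` -/
  gauss : ∀ X Y : TM, nablaBar X (Y : E) = (nabla X Y : E) + B X Y • Nt
  /-- the shape operator `A_N` of `M` -/
  AN : TM → TM
  /-- the transversal `1`-form `τ`, so that the transversal connection is `∇ᵗ_X N = τ(X) N` -/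
  tau : TM → F
  /-- Weingarten equation: `∇̄_X N = −A_N X + τ(X) N` -/
  weingarten : ∀ X : TM, nablaBar X Nt = -(AN X : E) + tau X • Nt
  /-- the screen shape operator `A*_ξ` -/
  Astar : TM → TM
  /-- `∇_X ξ = −A*_ξ X − τ(X) ξ` -/
  weingarten_screen : ∀ X : TM, nablaBar X (xi : E) = -(Astar X : E) - tau X • (xi : E)

/-- Let `(M,g)` be a lightlike hypersurface of a semi-Riemannian manifold `(M̄,ḡ)`. If
either the second fundamental form `h = B ⊗ N` or the local second fundamental form `B`
of `M` is parallel, then the screen shape operator `A*_ξ` satisfies `A*_ξ (A*_ξ X) = 0`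
for every `X` tangent to `M`. -/
theorem shape_operator_squared_zero_of_parallel
    (F : Type) [CommRing F] [Algebra ℝ F]
    (E : Type) [AddCommGroup E] [Module F E]
    (H : LightlikeHypersurface F E)
    (hpar : (∀ X Y Z : H.TM,
        (H.D X (H.B Y Z) + H.B Y Z * H.tau X) • H.Nt
          - H.B (H.nabla X Y) Z • H.Nt - H.B Y (H.nabla X Z) • H.Nt = 0)
      ∨ (∀ X Y Z : H.TM,
        H.D X (H.B Y Z) - H.B (H.nabla X Y) Z - H.B Y (H.nabla X Z) = 0)) :
    ∀ X : H.TM, H.Astar (H.Astar X) = 0 := by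

  -- basic consequences
  have hgξ : ∀ Y : H.TM, H.gbar (H.xi : E) (Y : E) = 0 := H.xi_normal
  -- B via the metric and the ambient connection
  have hBg : ∀ X Y : H.TM, H.B X Y = H.gbar (H.xi : E) (H.nablaBar X (Y : E)) := by
    intro X Y
    rw [H.gauss X Y, map_add, map_smul, hgξ (H.nabla X Y), H.gbar_xi_Nt, smul_eq_mul]
    ring
  have hτξ : ∀ X : H.TM, H.gbar (H.xi : E) (H.nablaBar X (H.xi : E)) = 0 := by
    intro X
    rw [H.weingarten_screen X]
    simp [map_sub, map_neg, map_smul, hgξ (H.Astar X), hgξ H.xi]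
  have hBξ : ∀ X : H.TM, H.B X H.xi = 0 := by
    intro X; rw [hBg]; exact hτξ X
  have hBsymm : ∀ X Y : H.TM, H.B X Y = H.B Y X := by
    intro X Y
    have h2 : H.gbar (H.xi : E) (H.nablaBar X (Y : E)) -
        H.gbar (H.xi : E) (H.nablaBar Y (X : E)) = 0 := by
      rw [← map_sub, H.nablaBar_torsion_free X Y]
      exact hgξ _
    rw [hBg X Y, hBg Y X]
    linear_combination h2
  -- the coercion of ∇_X ξ
  have hξcoe : ∀ X : H.TM, ((H.nabla X H.xi : H.TM) : E)
      = -(H.Astar X : E) - H.tau X • (H.xi : E) := by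
    intro X
    have hg := H.gauss X H.xi
    rw [hBξ X, zero_smul, add_zero] at hg
    rw [← hg, H.weingarten_screen X]
  -- additivity consequences for ∇̄ in the second slot
  have nb0 : ∀ X : H.TM, H.nablaBar X (0 : E) = 0 := by
    intro X
    have h := H.nablaBar_add' X 0 0
    rw [add_zero] at h
    exact (left_eq_add.mp h)
  have nbneg : ∀ (X : H.TM) (W : E), H.nablaBar X (-W) = -(H.nablaBar X W) := by
    intro X W
    have h := H.nablaBar_add' X W (-W)
    rw [add_neg_cancel, nb0 X] at h
    exact (eq_neg_of_add_eq_zero_right h.symm)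
  -- key computation: B(Y, ∇_X ξ) = - B(Y, A*X)
  have hBnξ : ∀ X Y : H.TM, H.B Y (H.nabla X H.xi) = -(H.B Y (H.Astar X)) := by
    intro X Y
    rw [hBg Y (H.nabla X H.xi), hξcoe X, sub_eq_add_neg, H.nablaBar_add', nbneg, nbneg,
      H.nablaBar_leibniz]
    rw [map_add, map_neg, map_neg, map_add, map_smul, map_smul, ← hBg Y (H.Astar X),
      hgξ H.xi, hτξ Y, smul_eq_mul, smul_eq_mul]
    ring
  -- parallelism gives B(Y, A*X) = 0
  have hkey : ∀ X Y : H.TM, H.B Y (H.Astar X) = 0 := by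
    intro X Y
    rcases hpar with hp | hp
    · have h := hp X Y H.xi
      rw [hBξ Y, hBξ (H.nabla X Y), map_zero, zero_mul, add_zero, zero_smul] at h
      rw [sub_zero, zero_sub, neg_eq_zero, hBnξ X Y, neg_smul, neg_eq_zero] at h
      have h2 := congrArg (H.gbar (H.xi : E)) h
      rw [map_smul, map_zero, H.gbar_xi_Nt, smul_eq_mul, mul_one] at h2
      exact h2
    · have h := hp X Y H.xi
      rw [hBξ Y, hBξ (H.nabla X Y), map_zero] at h
      linear_combination h + hBnξ X Y
  -- g(A*X, Y) = B(X, Y) for tangent Y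
  have hAg : ∀ X Y : H.TM, H.gbar (H.Astar X : E) (Y : E) = H.B X Y := by
    intro X Y
    have hm := H.nablaBar_metric X (H.xi : E) (Y : E)
    rw [hgξ Y, map_zero, H.weingarten_screen X, ← hBg X Y] at hm
    rw [map_sub, map_neg, map_smul, LinearMap.sub_apply, LinearMap.neg_apply,
      LinearMap.smul_apply, smul_eq_mul, hgξ Y] at hm
    linear_combination hm
  -- g(A*X, N) = 0
  have hAN0 : ∀ X : H.TM, H.gbar (H.Astar X : E) H.Nt = 0 := by
    intro X
    have hm := H.nablaBar_metric X (H.xi : E) H.Nt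
    rw [H.gbar_xi_Nt, Derivation.map_one_eq_zero, H.weingarten_screen X, H.weingarten X] at hm
    rw [map_sub, map_neg, map_smul, LinearMap.sub_apply, LinearMap.neg_apply,
      LinearMap.smul_apply, smul_eq_mul, H.gbar_xi_Nt, map_add, map_neg, map_smul,
      hgξ (H.AN X), smul_eq_mul, H.gbar_xi_Nt] at hm
    linear_combination hm
  -- conclusion
  intro X
  have hWorth : ∀ Y : H.TM, H.gbar ((H.Astar (H.Astar X) : H.TM) : E) (Y : E) = 0 := by
    intro Y
    rw [hAg (H.Astar X) Y, hBsymm (H.Astar X) Y]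
    exact hkey X Y
  obtain ⟨f, hf⟩ := H.xi_spans (H.Astar (H.Astar X)) hWorth
  have h1 : H.gbar ((H.Astar (H.Astar X) : H.TM) : E) H.Nt = 0 := hAN0 (H.Astar X)
  rw [hf, map_smul, LinearMap.smul_apply, smul_eq_mul, H.gbar_xi_Nt, mul_one] at h1
  have hz : ((H.Astar (H.Astar X) : H.TM) : E) = 0 := by rw [hf, h1, zero_smul]
  exact Submodule.coe_eq_zero.mp hz
end
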